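/- arXiv:math/0506342 — 5 statements merged into one kernel-verified Lean document; each statement's English description precedes it below -/
import Mathlib

section
/- Let Z be a real-valued random variable with Gaussian distribution N(μ, σ²), σ > 0. If λ ≥ 2|μ| and λ² ≥ 2σ², then P(|Z| > λ) ≤ (5λ/σ) · exp(−λ²/(8σ²)). -/
/-!
Centred, a Gaussian of variance `σ²` has moment-generating function `exp (σ² t² / 2)`, so the
Chernoff bound gives `P(Z - μ ≥ a) ≤ exp (-a² / (2σ²))` for `a ≥ 0`, and likewise for `μ - Z`.
The event `|Z| > λ` lies in `{Z - μ ≥ λ - μ} ∪ {μ - Z ≥ λ + μ}`, and `λ ≥ 2|μ|` makes both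
thresholds at least `λ / 2`; hence `P(|Z| > λ) ≤ 2 exp (-λ² / (8σ²))`. Finally `λ² ≥ 2σ²`
gives `λ ≥ σ`, so `2 ≤ 5λ/σ`.
-/

open MeasureTheory ProbabilityTheory Real
open scoped NNReal

namespace ProbabilityTheory

lemma hasSubgaussianMGF_id_gaussianReal_zero (v : ℝ≥0) :
    HasSubgaussianMGF id v (gaussianReal 0 v) where
  integrable_exp_mul t := integrable_exp_mul_gaussianReal t
  mgf_le t := by simp [mgf_id_gaussianReal]

variable {Ω : Type*} [MeasurableSpace Ω] {P : Measure Ω} {X : Ω → ℝ} {μ : ℝ} {v : ℝ≥0}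

lemma hasSubgaussianMGF_sub_of_map_eq_gaussianReal (hX : P.map X = gaussianReal μ v) :
    HasSubgaussianMGF (fun ω ↦ X ω - μ) v P := by
  have hXm : AEMeasurable X P := aemeasurable_of_map_neZero (by rw [hX]; infer_instance)
  have hlaw : P.map (fun ω ↦ X ω - μ) = gaussianReal 0 v := by
    have hcomp : (P.map X).map (· - μ) = P.map (fun ω ↦ X ω - μ) :=
      AEMeasurable.map_map_of_aemeasurable (by fun_prop) hXm
    rw [← hcomp, hX, gaussianReal_map_sub_const, sub_self]
  rw [← HasSubgaussianMGF.id_map_iff (by fun_prop), hlaw]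
  exact hasSubgaussianMGF_id_gaussianReal_zero v

lemma exp_neg_sq_div_le_of_half_le {a lam c : ℝ} (hc : 0 ≤ c) (hlam : 0 ≤ lam)
    (ha : lam / 2 ≤ a) :
    exp (-a ^ 2 / (2 * c)) ≤ exp (-lam ^ 2 / (8 * c)) := by
  have hsq : (lam / 2) ^ 2 / (2 * c) ≤ a ^ 2 / (2 * c) := by gcongr
  rw [exp_le_exp, neg_div, neg_div, neg_le_neg_iff]
  convert hsq using 1
  ring

lemma measureReal_abs_gt_le_of_map_eq_gaussianReal [IsFiniteMeasure P]
    (hX : P.map X = gaussianReal μ v) {lam : ℝ} (hlam : 2 * |μ| ≤ lam) :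
    P.real {ω | lam < |X ω|} ≤ 2 * exp (-lam ^ 2 / (8 * v)) := by
  have hsub := hasSubgaussianMGF_sub_of_map_eq_gaussianReal hX
  have hμ := le_abs_self μ
  have hμ' := neg_le_abs μ
  have hlam0 : 0 ≤ lam := le_trans (by positivity) hlam
  have hcover : {ω | lam < |X ω|} ⊆
      {ω | lam - μ ≤ X ω - μ} ∪ {ω | lam + μ ≤ (-fun ω ↦ X ω - μ) ω} := by
    intro ω hω
    rcases lt_abs.mp (show lam < |X ω| from hω) with h | h
    · exact Or.inl (by simp only [Set.mem_ofPred_eq]; linarith)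
    · exact Or.inr (by simp only [Set.mem_ofPred_eq, Pi.neg_apply]; linarith)
  calc P.real {ω | lam < |X ω|}
      ≤ P.real {ω | lam - μ ≤ X ω - μ} + P.real {ω | lam + μ ≤ (-fun ω ↦ X ω - μ) ω} :=
        (measureReal_mono hcover).trans (measureReal_union_le _ _)
    _ ≤ exp (-(lam - μ) ^ 2 / (2 * v)) + exp (-(lam + μ) ^ 2 / (2 * v)) :=
        add_le_add (hsub.measure_ge_le (by linarith)) (hsub.neg.measure_ge_le (by linarith))
    _ ≤ 2 * exp (-lam ^ 2 / (8 * v)) := by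
        linarith [exp_neg_sq_div_le_of_half_le (a := lam - μ) v.coe_nonneg hlam0 (by linarith),
          exp_neg_sq_div_le_of_half_le (a := lam + μ) v.coe_nonneg hlam0 (by linarith)]

end ProbabilityTheory

/-- Modified Mill's inequality (Lemma 7.1, part 1): if `Z ~ N(μ, σ²)`, `λ ≥ 2|μ|` and
`λ² ≥ 2σ²`, then `P(|Z| > λ) ≤ (5λ/σ) exp(−λ²/(8σ²))`. -/
theorem mills_modified_hard {Ω : Type*} [MeasurableSpace Ω] (P : Measure Ω)
    [IsProbabilityMeasure P] (Z : Ω → ℝ) (μ σ lam : ℝ) (hσ : 0 < σ)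
    (hZ : Measure.map Z P = gaussianReal μ ⟨σ ^ 2, sq_nonneg σ⟩)
    (hlam_mean : 2 * |μ| ≤ lam) (hlam_var : 2 * σ ^ 2 ≤ lam ^ 2) :
    P {ω | |Z ω| > lam} ≤
      ENNReal.ofReal (5 * lam / σ * Real.exp (-lam ^ 2 / (8 * σ ^ 2))) := by
  have hlam : σ ≤ lam :=
    abs_le_of_sq_le_sq' (by nlinarith) (le_trans (by positivity) hlam_mean) |>.2
  have hfactor : 2 ≤ 5 * lam / σ := by
    rw [le_div_iff₀ hσ]
    linarith
  rw [← ofReal_measureReal]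
  gcongr
  calc P.real {ω | lam < |Z ω|}
      ≤ 2 * exp (-lam ^ 2 / (8 * σ ^ 2)) :=
        measureReal_abs_gt_le_of_map_eq_gaussianReal hZ hlam_mean
    _ ≤ 5 * lam / σ * exp (-lam ^ 2 / (8 * σ ^ 2)) := by gcongr
end

section
/- Let Y ∈ ℝⁿ, let X be a real n × (d+1) matrix, and let W : ℝ → (n × n real matrices) be differentiable at h₀ with derivative W′(h₀). Suppose the matrix XᵀW(h₀)X is invertible. Define m̂(h) = e₁ᵀ (XᵀW(h)X)⁻¹ XᵀW(h) Y, where e₁ = (1,0,…,0)ᵀ ∈ ℝ^{d+1}. Then h ↦ m̂(h) is differentiable at h₀ with derivative m̂′(h₀) = e₁ᵀ (XᵀW(h₀)X)⁻¹ Xᵀ W′(h₀) (Y − X α̂), where α̂ = (XᵀW(h₀)X)⁻¹ XᵀW(h₀) Y. -/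
/-!
With `A = XᵀWX` and `B = XᵀW` we have `m̂ = e₁ᵀ A⁻¹ B Y`. The product rule together with
`(A⁻¹)′ = -A⁻¹ A′ A⁻¹` and `A′ = B′ X` gives `m̂′ = e₁ᵀ A⁻¹ B′ Y - e₁ᵀ A⁻¹ B′ X A⁻¹ B Y`,
which is `e₁ᵀ A⁻¹ B′ (Y - X α̂)`.
-/

open Matrix

-- Derivatives of matrix-valued maps only see the topology; this norm makes square matrices a
-- normed algebra, which the derivative of inversion needs.
attribute [local instance] Matrix.linftyOpNormedAddCommGroup Matrix.linftyOpNormedSpace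
  Matrix.linftyOpNormedRing Matrix.linftyOpNormedAlgebra

theorem HasDerivAt.ringInverse {𝕜 R : Type*} [NontriviallyNormedField 𝕜] [NormedRing R]
    [HasSummableGeomSeries R] [NormedAlgebra 𝕜 R] {f : 𝕜 → R} {f' : R} {x : 𝕜}
    (hf : HasDerivAt f f' x) (hx : IsUnit (f x)) :
    HasDerivAt (fun y => Ring.inverse (f y))
      (-(Ring.inverse (f x) * f' * Ring.inverse (f x))) x := by
  obtain ⟨u, hu⟩ := hx
  have := (hu ▸ hasFDerivAt_ringInverse (𝕜 := 𝕜) u).comp_hasDerivAt x hf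
  rw [← hu, Ring.inverse_unit]
  exact this

section MatrixDeriv

variable {𝕜 : Type*} [RCLike 𝕜]
  {l m n : Type*} [Fintype l] [Fintype m] [Fintype n] {x : 𝕜}

theorem Matrix.hasDerivAt_iff {M : 𝕜 → Matrix m n 𝕜} {M' : Matrix m n 𝕜} :
    HasDerivAt M M' x ↔ ∀ i j, HasDerivAt (fun y => M y i j) (M' i j) x := by
  let e : Matrix m n 𝕜 ≃L[𝕜] (m → n → 𝕜) :=
    (Matrix.ofLinearEquiv 𝕜).symm.toContinuousLinearEquiv
  constructor
  · intro hM i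
    exact hasDerivAt_pi.mp (hasDerivAt_pi.mp (e.hasFDerivAt.comp_hasDerivAt x hM) i)
  · intro hentries
    have he : HasDerivAt (e ∘ M) (e M') x :=
      hasDerivAt_pi.mpr fun i => hasDerivAt_pi.mpr (hentries i)
    exact e.symm.hasFDerivAt.comp_hasDerivAt x he

theorem HasDerivAt.matrix_mul {M : 𝕜 → Matrix l m 𝕜} {N : 𝕜 → Matrix m n 𝕜}
    {M' : Matrix l m 𝕜} {N' : Matrix m n 𝕜} (hM : HasDerivAt M M' x) (hN : HasDerivAt N N' x) :
    HasDerivAt (fun y => M y * N y) (M' * N x + M x * N') x := by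
  rw [Matrix.hasDerivAt_iff] at *
  intro i k
  simp only [mul_apply, Matrix.add_apply, ← Finset.sum_add_distrib]
  exact HasDerivAt.fun_sum fun j _ => (hM i j).mul (hN j k)

theorem HasDerivAt.matrix_mulVec {M : 𝕜 → Matrix m n 𝕜} {v : 𝕜 → n → 𝕜}
    {M' : Matrix m n 𝕜} {v' : n → 𝕜} (hM : HasDerivAt M M' x) (hv : HasDerivAt v v' x) :
    HasDerivAt (fun y => M y *ᵥ v y) (M' *ᵥ v x + M x *ᵥ v') x := by
  rw [Matrix.hasDerivAt_iff] at hM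
  rw [hasDerivAt_pi] at *
  intro i
  simp only [mulVec, dotProduct, Pi.add_apply, ← Finset.sum_add_distrib]
  exact HasDerivAt.fun_sum fun j _ => (hM i j).mul (hv j)

theorem HasDerivAt.matrix_inv [DecidableEq n] {A : 𝕜 → Matrix n n 𝕜} {A' : Matrix n n 𝕜}
    (hA : HasDerivAt A A' x) (hx : IsUnit (A x).det) :
    HasDerivAt (fun y => (A y)⁻¹) (-((A x)⁻¹ * A' * (A x)⁻¹)) x := by
  simp only [nonsing_inv_eq_ringInverse]
  exact hA.ringInverse ((isUnit_iff_isUnit_det _).mpr hx)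

end MatrixDeriv

/-- Derivative of the local linear estimator with respect to a bandwidth (Section 3):
if `m̂(h) = e₁ᵀ (XᵀW(h)X)⁻¹ XᵀW(h) Y` and `W` is differentiable at `h₀` with
`XᵀW(h₀)X` invertible, then `m̂′(h₀) = e₁ᵀ (XᵀW(h₀)X)⁻¹ Xᵀ W′(h₀) (Y − X α̂)` where
`α̂ = (XᵀW(h₀)X)⁻¹ XᵀW(h₀) Y`. -/
theorem deriv_local_linear_estimator (n d : ℕ) (Y : Fin n → ℝ)
    (X : Matrix (Fin n) (Fin (d + 1)) ℝ)
    (W : ℝ → Matrix (Fin n) (Fin n) ℝ) (W' : Matrix (Fin n) (Fin n) ℝ) (h₀ : ℝ)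
    (hW : ∀ i j, HasDerivAt (fun h => W h i j) (W' i j) h₀)
    (hinv : IsUnit (Xᵀ * W h₀ * X).det) :
    HasDerivAt (fun h => (((Xᵀ * W h * X)⁻¹ * (Xᵀ * W h)).mulVec Y) 0)
      ((((Xᵀ * W h₀ * X)⁻¹ * (Xᵀ * W')).mulVec
        (Y - X.mulVec (((Xᵀ * W h₀ * X)⁻¹ * (Xᵀ * W h₀)).mulVec Y))) 0) h₀ := by
  have hWmat : HasDerivAt W W' h₀ := Matrix.hasDerivAt_iff.mpr hW
  have hB : HasDerivAt (fun h => Xᵀ * W h) (Xᵀ * W') h₀ := by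
    simpa using (hasDerivAt_const h₀ Xᵀ).matrix_mul hWmat
  have hA : HasDerivAt (fun h => Xᵀ * W h * X) (Xᵀ * W' * X) h₀ := by
    simpa using hB.matrix_mul (hasDerivAt_const h₀ X)
  have hm := hasDerivAt_pi.mp
    (((hA.matrix_inv hinv).matrix_mul hB).matrix_mulVec (hasDerivAt_const h₀ Y)) 0
  refine hm.congr_deriv ?_
  simp only [mulVec_sub, mulVec_mulVec, mulVec_zero, add_zero, Matrix.add_mulVec, Matrix.mul_assoc,
    Matrix.neg_mul, Matrix.neg_mulVec]
  rw [neg_add_eq_sub]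
end

section
/- Let K : ℝ^d → ℝ be nonnegative and integrable with ∫ v_j K(v) dv = 0 for all j, ∫ v_j v_k K(v) dv = ν₂ δ_{jk} for a constant ν₂ and all j,k, ∫ v_a v_b v_c K(v) dv = 0 for all triples (a,b,c), and with finite mixed fourth absolute moments ∫ |v_j v_a v_b v_c| K(v) dv < ∞. Let f : ℝ^d → ℝ be three times continuously differentiable with all third-order partial derivatives uniformly bounded in absolute value by M₃. Let h₁,…,h_d > 0 and H^{1/2} = diag(h₁,…,h_d). Then for every x ∈ ℝ^d and every j, | ∫ K(v) h_j v_j f(x + H^{1/2} v) dv − ν₂ h_j² ∂_j f(x) | ≤ (M₃/6) · h_j · Σ_{a,b,c=1}^d h_a h_b h_c ∫ |v_j v_a v_b v_c| K(v) dv. -/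
open MeasureTheory Finset Set
open scoped Nat

/-!
Expand `f (x + H^{1/2} v)` to second order around `x`, with Lagrange remainder along the segment.
Integrated against `h_j v_j K(v)`, the constant and quadratic terms of the Taylor polynomial
vanish by the first- and third-moment conditions, and the linear term `∑ₐ hₐ vₐ ∂ₐ f(x)` leaves
only `ν₂ h_j² ∂_j f(x)` by the second-moment condition. Expanding the third derivative in
coordinates bounds the remainder by `(M₃/6) ∑_{a,b,c} |hₐ vₐ| |h_b v_b| |h_c v_c|`, and
multiplying by `|h_j v_j| K(v)` turns this into the fourth absolute moments.
-/

theorem Fintype.sum_fun_fin_succ {ι M : Type*} [Fintype ι] [AddCommMonoid M] {n : ℕ}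
    (F : (Fin (n + 1) → ι) → M) :
    ∑ r, F r = ∑ a, ∑ r : Fin n → ι, F (Matrix.vecCons a r) := by
  rw [← (Fin.consEquiv fun _ => ι).sum_comp, Fintype.sum_prod_type]
  rfl

namespace MultilinearMap

variable {R ι M : Type*} [CommSemiring R] [Fintype ι] [DecidableEq ι]
  [AddCommMonoid M] [Module R M]

theorem map_const_eq_sum_single {σ : Type*} [Fintype σ] [DecidableEq σ]
    (T : MultilinearMap R (fun _ : σ => ι → R) M) (w : ι → R) :
    T (fun _ => w) = ∑ r : σ → ι, (∏ i, w (r i)) • T (fun i => Pi.single (r i) 1) := by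
  calc T (fun _ => w) = T (fun _ => ∑ a, w a • Pi.single a 1) := by rw [← pi_eq_sum_univ' w]
    _ = _ := by simp only [T.map_sum, T.map_smul_univ]

theorem map_const_eq_sum_sum_single (T : MultilinearMap R (fun _ : Fin 2 => ι → R) M)
    (w : ι → R) :
    T (fun _ => w) = ∑ a, ∑ b, (w a * w b) • T ![Pi.single a 1, Pi.single b 1] := by
  simp only [T.map_const_eq_sum_single, Fintype.sum_fun_fin_succ, Fintype.sum_unique,
    Fin.prod_univ_two]
  refine Fintype.sum_congr _ _ fun a => Fintype.sum_congr _ _ fun b => ?_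
  congr 2
  ext i : 1
  fin_cases i <;> rfl

theorem map_const_eq_sum_sum_sum_single (T : MultilinearMap R (fun _ : Fin 3 => ι → R) M)
    (w : ι → R) :
    T (fun _ => w) = ∑ a, ∑ b, ∑ c, (w a * w b * w c) •
      T ![Pi.single a 1, Pi.single b 1, Pi.single c 1] := by
  simp only [T.map_const_eq_sum_single, Fintype.sum_fun_fin_succ, Fintype.sum_unique,
    Fin.prod_univ_three]
  refine Fintype.sum_congr _ _ fun a => Fintype.sum_congr _ _ fun b =>
    Fintype.sum_congr _ _ fun c => ?_
  congr 2
  ext i : 1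
  fin_cases i <;> rfl

end MultilinearMap

theorem MultilinearMap.abs_map_const_le_of_abs_map_single_le {ι : Type*} [Fintype ι]
    [DecidableEq ι] (T : MultilinearMap ℝ (fun _ : Fin 3 => ι → ℝ) ℝ) {M : ℝ}
    (hT : ∀ a b c, |T ![Pi.single a 1, Pi.single b 1, Pi.single c 1]| ≤ M) (w : ι → ℝ) :
    |T (fun _ => w)| ≤ M * ∑ a, ∑ b, ∑ c, |w a| * |w b| * |w c| := by
  rw [T.map_const_eq_sum_sum_sum_single]
  simp only [mul_sum]
  refine (abs_sum_le_sum_abs _ _).trans <| sum_le_sum fun a _ =>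
    (abs_sum_le_sum_abs _ _).trans <| sum_le_sum fun b _ =>
    (abs_sum_le_sum_abs _ _).trans <| sum_le_sum fun c _ => ?_
  rw [smul_eq_mul, abs_mul, abs_mul, abs_mul, mul_comm M]
  exact mul_le_mul_of_nonneg_left (hT a b c) (by positivity)

theorem iteratedDeriv_comp_add_smul {𝕜 E F : Type*} [NontriviallyNormedField 𝕜]
    [NormedAddCommGroup E] [NormedSpace 𝕜 E] [NormedAddCommGroup F] [NormedSpace 𝕜 F]
    {f : E → F} {n : WithTop ℕ∞} (hf : ContDiff 𝕜 n f) (x w : E) {k : ℕ} (hk : k ≤ n) (t : 𝕜) :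
    iteratedDeriv k (fun t => f (x + t • w)) t =
      iteratedFDeriv 𝕜 k f (x + t • w) (fun _ => w) := by
  have hline : (fun t => f (x + t • w)) =
      (fun z => f (x + z)) ∘ ContinuousLinearMap.smulRight (1 : 𝕜 →L[𝕜] 𝕜) w := rfl
  have hshift : ContDiff 𝕜 n fun z => f (x + z) := hf.comp (contDiff_const.add contDiff_id)
  rw [iteratedDeriv_eq_iteratedFDeriv, hline,
    ContinuousLinearMap.iteratedFDeriv_comp_right _ hshift t hk]
  simp [iteratedFDeriv_comp_add_left]

theorem ContDiff.exists_taylor_mean_remainder_lagrange {E : Type*} [NormedAddCommGroup E]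
    [NormedSpace ℝ E] {f : E → ℝ} {n : ℕ} (hf : ContDiff ℝ (n + 1) f) (x w : E) :
    ∃ t ∈ Ioo (0 : ℝ) 1,
      f (x + w) - ∑ k ∈ range (n + 1), iteratedFDeriv ℝ k f x (fun _ => w) / k ! =
        iteratedFDeriv ℝ (n + 1) f (x + t • w) (fun _ => w) / (n + 1)! := by
  have hg : ContDiff ℝ (n + 1) fun t : ℝ => f (x + t • w) :=
    hf.comp (contDiff_const.add (contDiff_id.smul contDiff_const))
  obtain ⟨t, ht, hT⟩ := taylor_mean_remainder_lagrange_iteratedDeriv zero_ne_one hg.contDiffOn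
  rw [uIoo_of_le zero_le_one] at ht
  refine ⟨t, ht, ?_⟩
  have hcoeff : ∀ k ∈ range (n + 1), ((k ! : ℝ)⁻¹ * (1 - 0) ^ k) •
      iteratedDerivWithin k (fun t : ℝ => f (x + t • w)) (uIcc 0 1) 0 =
        iteratedFDeriv ℝ k f x (fun _ => w) / k ! := by
    intro k hk
    have hkn : (k : WithTop ℕ∞) ≤ n + 1 := by exact_mod_cast (mem_range.1 hk).le
    rw [iteratedDerivWithin_eq_iteratedDeriv (uniqueDiffOn_uIcc zero_ne_one)
      (hg.of_le hkn).contDiffAt left_mem_uIcc, iteratedDeriv_comp_add_smul hf x w hkn]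
    simp [div_eq_inv_mul]
  rw [taylor_within_apply, sum_congr rfl hcoeff,
    iteratedDeriv_comp_add_smul hf x w le_rfl] at hT
  simpa using hT

theorem abs_sub_quadratic_taylor_le {ι : Type*} [Fintype ι] [DecidableEq ι] {f : (ι → ℝ) → ℝ}
    (hf : ContDiff ℝ 3 f) {M : ℝ}
    (hM : ∀ y a b c,
      |iteratedFDeriv ℝ 3 f y ![Pi.single a 1, Pi.single b 1, Pi.single c 1]| ≤ M)
    (x w : ι → ℝ) :
    |f (x + w) - (f x + ∑ a, w a * fderiv ℝ f x (Pi.single a 1) +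
      (∑ a, ∑ b, w a * w b * iteratedFDeriv ℝ 2 f x ![Pi.single a 1, Pi.single b 1]) / 2)| ≤
      M / 6 * ∑ a, ∑ b, ∑ c, |w a| * |w b| * |w c| := by
  obtain ⟨t, -, hT⟩ := hf.exists_taylor_mean_remainder_lagrange (n := 2) x w
  have hD₁ : fderiv ℝ f x w = ∑ a, w a * fderiv ℝ f x (Pi.single a 1) := by
    conv_lhs => rw [pi_eq_sum_univ' w]
    simp only [map_sum, map_smul, smul_eq_mul]
  have hD₂ := (iteratedFDeriv ℝ 2 f x).toMultilinearMap.map_const_eq_sum_sum_single w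
  have hD₃ := (iteratedFDeriv ℝ 3 f (x + t • w)).toMultilinearMap
    |>.abs_map_const_le_of_abs_map_single_le (hM _) w
  simp only [ContinuousMultilinearMap.coe_coe, smul_eq_mul] at hD₂ hD₃
  simp only [sum_range_succ, sum_range_zero, iteratedFDeriv_zero_apply,
    iteratedFDeriv_one_apply, hD₁, hD₂] at hT
  norm_num [Nat.factorial] at hT
  rw [hT, abs_div, abs_of_pos (by norm_num : (0 : ℝ) < 6)]
  linarith

section KernelMoments

variable {ι : Type*} [Fintype ι] {μ : Measure (ι → ℝ)} {K : (ι → ℝ) → ℝ}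

theorem integral_mul_quadratic_eq [DecidableEq ι] {ν₂ : ℝ}
    (hK₁_int : ∀ a, Integrable (fun v => v a * K v) μ) (hK₁ : ∀ a, ∫ v, v a * K v ∂μ = 0)
    (hK₂_int : ∀ a b, Integrable (fun v => v a * v b * K v) μ)
    (hK₂ : ∀ a b, ∫ v, v a * v b * K v ∂μ = if a = b then ν₂ else 0)
    (hK₃_int : ∀ a b c, Integrable (fun v => v a * v b * v c * K v) μ)
    (hK₃ : ∀ a b c, ∫ v, v a * v b * v c * K v ∂μ = 0)
    (h : ι → ℝ) (j : ι) (c₀ : ℝ) (c₁ : ι → ℝ) (c₂ : ι → ι → ℝ) :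
    Integrable (fun v => K v * (h j * v j) * (c₀ + ∑ a, h a * v a * c₁ a +
      (∑ a, ∑ b, h a * v a * (h b * v b) * c₂ a b) / 2)) μ ∧
    ∫ v, K v * (h j * v j) * (c₀ + ∑ a, h a * v a * c₁ a +
      (∑ a, ∑ b, h a * v a * (h b * v b) * c₂ a b) / 2) ∂μ = ν₂ * h j ^ 2 * c₁ j := by
  have hsplit : ∀ v : ι → ℝ, K v * (h j * v j) * (c₀ + ∑ a, h a * v a * c₁ a +
      (∑ a, ∑ b, h a * v a * (h b * v b) * c₂ a b) / 2) =
      h j * c₀ * (v j * K v) + ∑ a, h j * h a * c₁ a * (v j * v a * K v) +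
        ∑ a, ∑ b, h j * h a * h b * c₂ a b / 2 * (v j * v a * v b * K v) := by
    intro v
    simp only [mul_add, mul_sum, sum_div]
    refine congrArg₂ (· + ·) (congrArg₂ (· + ·) (by ring) ?_) ?_
    · exact sum_congr rfl fun a _ => by ring
    · exact sum_congr rfl fun a _ => sum_congr rfl fun b _ => by ring
  have hI₁ := (hK₁_int j).const_mul (h j * c₀)
  have hI₂ := integrable_finsetSum univ fun a _ => (hK₂_int j a).const_mul (h j * h a * c₁ a)
  have hI₃ := integrable_finsetSum univ fun a _ => integrable_finsetSum univ fun b _ =>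
    (hK₃_int j a b).const_mul (h j * h a * h b * c₂ a b / 2)
  simp only [hsplit]
  refine ⟨(hI₁.add hI₂).add hI₃, ?_⟩
  rw [integral_add (by exact hI₁.add hI₂) hI₃, integral_add hI₁ hI₂,
    integral_finsetSum _ fun a _ => (hK₂_int j a).const_mul _,
    integral_finsetSum _ fun a _ => integrable_finsetSum univ fun b _ =>
      (hK₃_int j a b).const_mul _]
  simp only [integral_finsetSum _ fun b _ => (hK₃_int _ _ b).const_mul _, integral_const_mul,
    hK₁, hK₂, hK₃, mul_ite, mul_zero, Fintype.sum_ite_eq, sum_const_zero]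
  ring

theorem abs_integral_mul_le_of_abs_le_cubic (hK_nonneg : ∀ v, 0 ≤ K v)
    (hK₄_int : ∀ a b c e, Integrable (fun v => |v a * v b * v c * v e| * K v) μ)
    {h : ι → ℝ} (hh : ∀ i, 0 ≤ h i) (j : ι) {R : (ι → ℝ) → ℝ} {M : ℝ}
    (hR_meas : AEStronglyMeasurable (fun v => K v * (h j * v j) * R v) μ)
    (hR : ∀ v, |R v| ≤ M * ∑ a, ∑ b, ∑ c, |h a * v a| * |h b * v b| * |h c * v c|) :
    Integrable (fun v => K v * (h j * v j) * R v) μ ∧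
    |∫ v, K v * (h j * v j) * R v ∂μ| ≤
      M * h j * ∑ a, ∑ b, ∑ c, h a * h b * h c * ∫ v, |v j * v a * v b * v c| * K v ∂μ := by
  set bound : (ι → ℝ) → ℝ := fun v =>
    ∑ a, ∑ b, ∑ c, M * h j * (h a * h b * h c) * (|v j * v a * v b * v c| * K v)
  have hbound_int : Integrable bound μ :=
    integrable_finsetSum _ fun a _ => integrable_finsetSum _ fun b _ =>
      integrable_finsetSum _ fun c _ => (hK₄_int j a b c).const_mul _
  have hle : ∀ v, |K v * (h j * v j) * R v| ≤ bound v := by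
    intro v
    calc |K v * (h j * v j) * R v| = K v * |h j * v j| * |R v| := by
          rw [abs_mul, abs_mul, abs_of_nonneg (hK_nonneg v)]
      _ ≤ K v * |h j * v j| *
          (M * ∑ a, ∑ b, ∑ c, |h a * v a| * |h b * v b| * |h c * v c|) := by
          gcongr
          · exact mul_nonneg (hK_nonneg v) (abs_nonneg _)
          · exact hR v
      _ = bound v := by
          simp only [bound, mul_sum, abs_mul, abs_of_nonneg (hh _)]
          exact sum_congr rfl fun a _ => sum_congr rfl fun b _ =>
            sum_congr rfl fun c _ => by ring
  have hint : Integrable (fun v => K v * (h j * v j) * R v) μ :=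
    hbound_int.mono' hR_meas (Filter.Eventually.of_forall hle)
  refine ⟨hint, ?_⟩
  calc |∫ v, K v * (h j * v j) * R v ∂μ| ≤ ∫ v, |K v * (h j * v j) * R v| ∂μ :=
        abs_integral_le_integral_abs
    _ ≤ ∫ v, bound v ∂μ := integral_mono hint.abs hbound_int hle
    _ = _ := by
        simp only [bound, mul_sum]
        rw [integral_finsetSum _ fun a _ => integrable_finsetSum _ fun b _ =>
          integrable_finsetSum _ fun c _ => (hK₄_int j a b c).const_mul _]
        refine sum_congr rfl fun a _ => ?_
        rw [integral_finsetSum _ fun b _ => integrable_finsetSum _ fun c _ =>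
          (hK₄_int j a b c).const_mul _]
        refine sum_congr rfl fun b _ => ?_
        rw [integral_finsetSum _ fun c _ => (hK₄_int j a b c).const_mul _]
        exact sum_congr rfl fun c _ => by rw [integral_const_mul]; ring

end KernelMoments

/-- First-moment expansion (analysis of `A₂₁` in the proof of Theorem 5.1): for a
nonnegative kernel `K` with zero odd moments, `∫ v_j v_k K = ν₂ δ_{jk}` and finite mixed
fourth absolute moments, and `f` three times continuously differentiable with third
partials bounded by `M₃`,
`|∫ K(v) h_j v_j f(x + H^{1/2}v) dv − ν₂ h_j² ∂_j f(x)|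
   ≤ (M₃/6) h_j ∑_{a,b,c} h_a h_b h_c ∫ |v_j v_a v_b v_c| K(v) dv`. -/
theorem kernel_first_moment_expansion (d : ℕ) (K : (Fin d → ℝ) → ℝ)
    (hK_nonneg : ∀ v, 0 ≤ K v) (hK_int : Integrable K)
    (hK_mom1_int : ∀ j, Integrable (fun v => v j * K v))
    (hK_mom1 : ∀ j, ∫ v, v j * K v = 0)
    (ν₂ : ℝ)
    (hK_mom2_int : ∀ j k, Integrable (fun v => v j * v k * K v))
    (hK_mom2 : ∀ j k, ∫ v, v j * v k * K v = if j = k then ν₂ else 0)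
    (hK_mom3_int : ∀ a b c, Integrable (fun v => v a * v b * v c * K v))
    (hK_mom3 : ∀ a b c, ∫ v, v a * v b * v c * K v = 0)
    (hK_mom4_int : ∀ a b c e, Integrable (fun v => |v a * v b * v c * v e| * K v))
    (f : (Fin d → ℝ) → ℝ) (hf : ContDiff ℝ 3 f)
    (M₃ : ℝ)
    (hM₃ : ∀ y a b c,
      |iteratedFDeriv ℝ 3 f y ![Pi.single a 1, Pi.single b 1, Pi.single c 1]| ≤ M₃)
    (h : Fin d → ℝ) (hh : ∀ j, 0 < h j) (x : Fin d → ℝ) (j : Fin d) :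
    |(∫ v, K v * (h j * v j) * f (fun i => x i + h i * v i)) -
        ν₂ * (h j) ^ 2 * fderiv ℝ f x (Pi.single j 1)| ≤
      M₃ / 6 * h j * ∑ a, ∑ b, ∑ c,
        h a * h b * h c * ∫ v, |v j * v a * v b * v c| * K v := by
  let Df a := fderiv ℝ f x (Pi.single a 1)
  let D2 a b := iteratedFDeriv ℝ 2 f x ![Pi.single a 1, Pi.single b 1]
  let P (v : Fin d → ℝ) :=
    f x + ∑ a, h a * v a * Df a + (∑ a, ∑ b, h a * v a * (h b * v b) * D2 a b) / 2
  obtain ⟨hP_int, hP⟩ := integral_mul_quadratic_eq hK_mom1_int hK_mom1 hK_mom2_int hK_mom2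
    hK_mom3_int hK_mom3 h j (f x) Df D2
  have hR_meas : AEStronglyMeasurable
      (fun v => K v * (h j * v j) * (f (fun i => x i + h i * v i) - P v)) := by
    have hf_cont := hf.continuous
    exact (hK_int.aestronglyMeasurable.mul (Continuous.aestronglyMeasurable (by fun_prop))).mul
      (Continuous.aestronglyMeasurable (by fun_prop))
  obtain ⟨hR_int, hR⟩ := abs_integral_mul_le_of_abs_le_cubic hK_nonneg hK_mom4_int
    (fun i => (hh i).le) j hR_meas fun v =>
      abs_sub_quadratic_taylor_le hf hM₃ x (fun i => h i * v i)
  have hsplit : ∫ v, K v * (h j * v j) * f (fun i => x i + h i * v i) =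
      (∫ v, K v * (h j * v j) * P v) +
        ∫ v, K v * (h j * v j) * (f (fun i => x i + h i * v i) - P v) := by
    rw [← integral_add hP_int hR_int]
    congr with v
    ring
  rwa [hsplit, hP, add_sub_cancel_left]
end

section
/- Let K : ℝ^d → ℝ be nonnegative and integrable with ∫ K(v) dv = 1, ∫ v_j K(v) dv = 0 for all j, ∫ v_j v_k K(v) dv = ν₂ δ_{jk} for a constant ν₂ and all j,k, ∫ v_a v_b v_c K(v) dv = 0 for all triples (a,b,c), and with finite mixed fourth absolute moments ∫ |v_j v_k v_a v_b| K(v) dv < ∞. Let f : ℝ^d → ℝ be twice continuously differentiable with all second-order partial derivatives uniformly bounded in absolute value by M₂. Let h₁,…,h_d > 0 and H^{1/2} = diag(h₁,…,h_d). Then for every x ∈ ℝ^d and all indices j,k, | ∫ K(v) h_j v_j h_k v_k f(x + H^{1/2} v) dv − ν₂ f(x) h_j² δ_{jk} | ≤ (M₂/2) · h_j h_k · Σ_{a,b=1}^d h_a h_b ∫ |v_j v_k v_a v_b| K(v) dv. -/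
open MeasureTheory

/-!
Write `f (x + h v) = f x + Df(x) (h v) + R v`. Taylor's theorem along the segment, with the
coordinatewise bound on the Hessian, gives `|R v| ≤ (M₂/2) (∑ₐ hₐ |vₐ|)²`. Integrated against
`v_j v_k K`, the constant term gives `ν₂ f(x) δ_{jk}` by the second moments, the linear term
vanishes by the third moments, and the remainder is dominated by the mixed fourth absolute moments.
-/

theorem ContinuousLinearMap.apply_apply_eq_sum_single {ι : Type*} [Fintype ι] [DecidableEq ι]
    (B : (ι → ℝ) →L[ℝ] (ι → ℝ) →L[ℝ] ℝ) (u w : ι → ℝ) :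
    B u w = ∑ a, ∑ b, u a * w b * B (Pi.single a 1) (Pi.single b 1) := by
  conv_lhs => rw [pi_eq_sum_univ' u, pi_eq_sum_univ' w]
  simp only [map_sum, map_smul, sum_apply, smul_apply, smul_eq_mul, Finset.mul_sum]
  rw [Finset.sum_comm]
  exact Finset.sum_congr rfl fun a _ => Finset.sum_congr rfl fun b _ => by ring

theorem ContinuousLinearMap.abs_apply_apply_le {ι : Type*} [Fintype ι] [DecidableEq ι]
    (B : (ι → ℝ) →L[ℝ] (ι → ℝ) →L[ℝ] ℝ) {M : ℝ}
    (hB : ∀ a b, |B (Pi.single a 1) (Pi.single b 1)| ≤ M) (u w : ι → ℝ) :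
    |B u w| ≤ M * (∑ a, |u a|) * ∑ b, |w b| := by
  rw [B.apply_apply_eq_sum_single, mul_assoc, Finset.sum_mul_sum, Finset.mul_sum]
  refine (Finset.abs_sum_le_sum_abs _ _).trans (Finset.sum_le_sum fun a _ => ?_)
  rw [Finset.mul_sum]
  refine (Finset.abs_sum_le_sum_abs _ _).trans (Finset.sum_le_sum fun b _ => ?_)
  rw [abs_mul, abs_mul]
  exact (mul_le_mul_of_nonneg_left (hB a b) (by positivity)).trans_eq (mul_comm _ _)

theorem norm_image_sub_sub_fderiv_le {E F : Type*} [NormedAddCommGroup E] [NormedSpace ℝ E]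
    [NormedAddCommGroup F] [NormedSpace ℝ F] {f : E → F} (hf : ContDiff ℝ 2 f) {C : ℝ} {x u : E}
    (hC : ∀ t ∈ Set.Icc (0 : ℝ) 1, ‖fderiv ℝ (fderiv ℝ f) (x + t • u) u u‖ ≤ C) :
    ‖f (x + u) - f x - fderiv ℝ f x u‖ ≤ C / 2 := by
  have hf' : ContDiff ℝ 1 (fderiv ℝ f) := hf.fderiv_right (by norm_num)
  have hline : ∀ t : ℝ, HasDerivAt (fun s : ℝ => x + s • u) u t := fun t => by
    simpa using ((hasDerivAt_id t).smul_const u).const_add x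
  have hDf : ∀ t : ℝ, HasDerivAt (fun s : ℝ => fderiv ℝ f (x + s • u) u)
      (fderiv ℝ (fderiv ℝ f) (x + t • u) u u) t := fun t =>
    (((hf'.differentiable one_ne_zero) _).hasFDerivAt.comp_hasDerivAt t (hline t)).clm_apply
      (hasDerivAt_const t u) |>.congr_deriv (by simp)
  have hDf_sub : ∀ t ∈ Set.Icc (0 : ℝ) 1,
      ‖fderiv ℝ f (x + t • u) u - fderiv ℝ f x u‖ ≤ C * t := fun t ht => by
    simpa using norm_image_sub_le_of_norm_deriv_le_segment'
      (fun s _ => (hDf s).hasDerivWithinAt) (fun s hs => hC s (Set.Ico_subset_Icc_self hs)) t ht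
  have hg : ∀ t : ℝ, HasDerivAt (fun s : ℝ => f (x + s • u) - f x - s • fderiv ℝ f x u)
      (fderiv ℝ f (x + t • u) u - fderiv ℝ f x u) t := fun t => by
    have := (((hf.differentiable two_ne_zero) _).hasFDerivAt.comp_hasDerivAt t
      (hline t)).sub_const (f x) |>.sub ((hasDerivAt_id t).smul_const (fderiv ℝ f x u))
    exact this.congr_deriv (by simp)
  -- The remainder along the segment is fenced by `C t² / 2`, its derivative having norm `≤ C t`.
  have hB : ∀ t : ℝ, HasDerivAt (fun s : ℝ => C / 2 * s ^ 2) (C * t) t := fun t =>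
    ((hasDerivAt_pow 2 t).const_mul (C / 2)).congr_deriv (by push_cast; ring)
  simpa using image_norm_le_of_norm_deriv_right_le_deriv_boundary
    (fun t _ => (hg t).continuousAt.continuousWithinAt) (fun t _ => (hg t).hasDerivWithinAt)
    (by simp) hB (fun t ht => hDf_sub t (Set.Ico_subset_Icc_self ht))
    (Set.right_mem_Icc.mpr zero_le_one)

theorem abs_sub_sub_fderiv_le_of_abs_iteratedFDeriv_two_le {ι : Type*} [Fintype ι]
    [DecidableEq ι] {f : (ι → ℝ) → ℝ} (hf : ContDiff ℝ 2 f) {M : ℝ}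
    (hM : ∀ y a b, |iteratedFDeriv ℝ 2 f y ![Pi.single a 1, Pi.single b 1]| ≤ M)
    (x u : ι → ℝ) :
    |f (x + u) - f x - fderiv ℝ f x u| ≤ M / 2 * (∑ a, |u a|) ^ 2 := by
  refine (norm_image_sub_sub_fderiv_le (C := M * (∑ a, |u a|) ^ 2) hf fun t _ => ?_).trans_eq
    (by ring)
  refine ((fderiv ℝ (fderiv ℝ f) _).abs_apply_apply_le (M := M) (fun a b => ?_) u u).trans_eq
    (by ring)
  simpa [iteratedFDeriv_two_apply] using hM (x + t • u) a b

section Moments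

variable {ι : Type*} [Fintype ι] {μ : Measure (ι → ℝ)} {w : (ι → ℝ) → ℝ}

theorem mul_linearMap_eq_sum [DecidableEq ι] (ℓ : (ι → ℝ) →ₗ[ℝ] ℝ) (v : ι → ℝ) :
    w v * ℓ v = ∑ a, ℓ (Pi.single a 1) * (w v * v a) := by
  have hℓ : ℓ v = ∑ a, v a * ℓ (Pi.single a 1) := by
    conv_lhs => rw [pi_eq_sum_univ' v]
    simp only [map_sum, map_smul, smul_eq_mul]
  rw [hℓ, Finset.mul_sum]
  exact Finset.sum_congr rfl fun a _ => by ring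

theorem integrable_mul_linearMap (hw : ∀ a, Integrable (fun v => w v * v a) μ)
    (ℓ : (ι → ℝ) →ₗ[ℝ] ℝ) : Integrable (fun v => w v * ℓ v) μ := by
  classical
  simp_rw [mul_linearMap_eq_sum ℓ]
  exact integrable_finsetSum _ fun a _ => (hw a).const_mul _

theorem integral_mul_linearMap_eq_zero (hw : ∀ a, Integrable (fun v => w v * v a) μ)
    (hw₀ : ∀ a, ∫ v, w v * v a ∂μ = 0) (ℓ : (ι → ℝ) →ₗ[ℝ] ℝ) :
    ∫ v, w v * ℓ v ∂μ = 0 := by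
  classical
  simp_rw [mul_linearMap_eq_sum ℓ]
  rw [integral_finsetSum _ fun a _ => (hw a).const_mul _]
  simp [integral_const_mul, hw₀]

variable {K R : (ι → ℝ) → ℝ} {j k : ι} {C : ℝ} {c : ι → ℝ}

theorem abs_mul_le_of_abs_le_sq (hK : ∀ v, 0 ≤ K v)
    (hR : ∀ v, |R v| ≤ C * (∑ a, c a * |v a|) ^ 2) (v : ι → ℝ) :
    |v j * v k * K v * R v| ≤ C * ∑ a, ∑ b, c a * c b * (|v j * v k * v a * v b| * K v) := by
  have hsq : ∑ a, ∑ b, c a * c b * (|v j * v k * v a * v b| * K v)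
      = |v j * v k| * K v * (∑ a, c a * |v a|) ^ 2 := by
    rw [sq, Finset.sum_mul_sum, Finset.mul_sum]
    refine Finset.sum_congr rfl fun a _ => ?_
    rw [Finset.mul_sum]
    exact Finset.sum_congr rfl fun b _ => by simp only [abs_mul]; ring
  rw [hsq, abs_mul, abs_mul _ (K v), abs_of_nonneg (hK v), mul_left_comm]
  exact mul_le_mul_of_nonneg_left (hR v) (mul_nonneg (abs_nonneg _) (hK v))

theorem integrable_sum_mul_fourth_moment
    (hK₄ : ∀ a b, Integrable (fun v => |v j * v k * v a * v b| * K v) μ) (a : ι) :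
    Integrable (fun v => ∑ b, c a * c b * (|v j * v k * v a * v b| * K v)) μ :=
  integrable_finsetSum _ fun b _ => (hK₄ a b).const_mul _

theorem integrable_mul_of_abs_le_sq (hK : ∀ v, 0 ≤ K v)
    (hK₄ : ∀ a b, Integrable (fun v => |v j * v k * v a * v b| * K v) μ)
    (hR : ∀ v, |R v| ≤ C * (∑ a, c a * |v a|) ^ 2)
    (hmeas : AEStronglyMeasurable (fun v => v j * v k * K v * R v) μ) :
    Integrable (fun v => v j * v k * K v * R v) μ :=
  .mono' ((integrable_finsetSum _ fun a _ =>
      integrable_sum_mul_fourth_moment (c := c) hK₄ a).const_mul C) hmeas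
    (.of_forall fun v => abs_mul_le_of_abs_le_sq hK hR v)

theorem abs_integral_mul_le_of_abs_le_sq (hK : ∀ v, 0 ≤ K v)
    (hK₄ : ∀ a b, Integrable (fun v => |v j * v k * v a * v b| * K v) μ)
    (hR : ∀ v, |R v| ≤ C * (∑ a, c a * |v a|) ^ 2) :
    |∫ v, v j * v k * K v * R v ∂μ|
      ≤ C * ∑ a, ∑ b, c a * c b * ∫ v, |v j * v k * v a * v b| * K v ∂μ := by
  have hdom := integrable_sum_mul_fourth_moment (c := c) hK₄
  refine (norm_integral_le_of_norm_le (f := fun v => v j * v k * K v * R v)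
    ((integrable_finsetSum _ fun a _ => hdom a).const_mul C)
    (.of_forall fun v => abs_mul_le_of_abs_le_sq hK hR v)).trans_eq ?_
  rw [integral_const_mul, integral_finsetSum _ fun a _ => hdom a]
  simp_rw [integral_finsetSum _ fun b _ => (hK₄ _ b).const_mul _, integral_const_mul]

end Moments

theorem kernel_second_moment_expansion_general (d : ℕ) (K : (Fin d → ℝ) → ℝ)
    (hK_nonneg : ∀ v, 0 ≤ K v)
    (ν₂ : ℝ)
    (hK_mom2_int : ∀ j k, Integrable (fun v => v j * v k * K v))
    (hK_mom2 : ∀ j k, ∫ v, v j * v k * K v = if j = k then ν₂ else 0)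
    (hK_mom3_int : ∀ a b c, Integrable (fun v => v a * v b * v c * K v))
    (hK_mom3 : ∀ a b c, ∫ v, v a * v b * v c * K v = 0)
    (hK_mom4_int : ∀ a b c e, Integrable (fun v => |v a * v b * v c * v e| * K v))
    (f : (Fin d → ℝ) → ℝ) (hf : ContDiff ℝ 2 f)
    (M₂ : ℝ)
    (hM₂ : ∀ y a b, |iteratedFDeriv ℝ 2 f y ![Pi.single a 1, Pi.single b 1]| ≤ M₂)
    (h : Fin d → ℝ) (hh : ∀ j, 0 < h j) (x : Fin d → ℝ) (j k : Fin d) :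
    |(∫ v, K v * (h j * v j) * (h k * v k) * f (fun i => x i + h i * v i)) -
        ν₂ * f x * (h j) ^ 2 * (if j = k then 1 else 0)| ≤
      M₂ / 2 * (h j * h k) * ∑ a, ∑ b,
        h a * h b * ∫ v, |v j * v k * v a * v b| * K v := by
  set w : (Fin d → ℝ) → ℝ := fun v => v j * v k * K v
  set ℓ : (Fin d → ℝ) →ₗ[ℝ] ℝ := (fderiv ℝ f x).toLinearMap ∘ₗ LinearMap.mulLeft ℝ h
  set R : (Fin d → ℝ) → ℝ := fun v => f (x + h * v) - f x - ℓ v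
  have hw_mom3 : ∀ a, (fun v => w v * v a) = fun v => v j * v k * v a * K v :=
    fun a => funext fun v => mul_right_comm _ _ _
  have hw_int : ∀ a, Integrable (fun v => w v * v a) := fun a => hw_mom3 a ▸ hK_mom3_int j k a
  have hw₀ : ∀ a, ∫ v, w v * v a = 0 := fun a => hw_mom3 a ▸ hK_mom3 j k a
  have hR : ∀ v, |R v| ≤ M₂ / 2 * (∑ a, h a * |v a|) ^ 2 := fun v =>
    (abs_sub_sub_fderiv_le_of_abs_iteratedFDeriv_two_le hf hM₂ x (h * v)).trans_eq <| by
      simp only [Pi.mul_apply, abs_mul, abs_of_pos (hh _)]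
  have hR_int : Integrable (fun v => w v * R v) :=
    integrable_mul_of_abs_le_sq hK_nonneg (hK_mom4_int j k) hR
      ((hK_mom2_int j k).aestronglyMeasurable.mul (by fun_prop))
  have hℓ_int := integrable_mul_linearMap hw_int ℓ
  have hsplit : (fun v => K v * (h j * v j) * (h k * v k) * f (fun i => x i + h i * v i)) =
      fun v => h j * h k * (f x * w v + w v * ℓ v + w v * R v) := by
    funext v
    simp only [w, R]
    rw [show (fun i => x i + h i * v i) = x + h * v from rfl]
    ring
  rw [hsplit, integral_const_mul, integral_add (f := fun v => f x * w v + w v * ℓ v)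
      (((hK_mom2_int j k).const_mul _).add hℓ_int) hR_int,
    integral_add ((hK_mom2_int j k).const_mul _) hℓ_int, integral_const_mul, hK_mom2,
    integral_mul_linearMap_eq_zero hw_int hw₀]
  have hjk : 0 < h j * h k := mul_pos (hh j) (hh k)
  calc _ = |h j * h k * ∫ v, w v * R v| := by
        congr 1
        split_ifs with hjk' <;> [subst hjk'; skip] <;> ring
    _ = h j * h k * |∫ v, w v * R v| := by rw [abs_mul, abs_of_pos hjk]
    _ ≤ _ := mul_le_mul_of_nonneg_left
          (abs_integral_mul_le_of_abs_le_sq hK_nonneg (hK_mom4_int j k) hR) hjk.le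
    _ = _ := by ring

/-- Second-moment expansion (analysis of `A₂₂` in the proof of Theorem 5.1): for a
nonnegative kernel `K` with unit mass, zero odd moments, `∫ v_j v_k K = ν₂ δ_{jk}` and
finite mixed fourth absolute moments, and `f` twice continuously differentiable with
second partials bounded by `M₂`,
`|∫ K(v) h_j v_j h_k v_k f(x + H^{1/2}v) dv − ν₂ f(x) h_j² δ_{jk}|
   ≤ (M₂/2) h_j h_k ∑_{a,b} h_a h_b ∫ |v_j v_k v_a v_b| K(v) dv`. -/
theorem kernel_second_moment_expansion (d : ℕ) (K : (Fin d → ℝ) → ℝ)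
    (hK_nonneg : ∀ v, 0 ≤ K v) (hK_int : Integrable K)
    (hK_mass : ∫ v, K v = 1)
    (hK_mom1_int : ∀ j, Integrable (fun v => v j * K v))
    (hK_mom1 : ∀ j, ∫ v, v j * K v = 0)
    (ν₂ : ℝ)
    (hK_mom2_int : ∀ j k, Integrable (fun v => v j * v k * K v))
    (hK_mom2 : ∀ j k, ∫ v, v j * v k * K v = if j = k then ν₂ else 0)
    (hK_mom3_int : ∀ a b c, Integrable (fun v => v a * v b * v c * K v))
    (hK_mom3 : ∀ a b c, ∫ v, v a * v b * v c * K v = 0)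
    (hK_mom4_int : ∀ a b c e, Integrable (fun v => |v a * v b * v c * v e| * K v))
    (f : (Fin d → ℝ) → ℝ) (hf : ContDiff ℝ 2 f)
    (M₂ : ℝ)
    (hM₂ : ∀ y a b, |iteratedFDeriv ℝ 2 f y ![Pi.single a 1, Pi.single b 1]| ≤ M₂)
    (h : Fin d → ℝ) (hh : ∀ j, 0 < h j) (x : Fin d → ℝ) (j k : Fin d) :
    |(∫ v, K v * (h j * v j) * (h k * v k) * f (fun i => x i + h i * v i)) -
        ν₂ * f x * (h j) ^ 2 * (if j = k then 1 else 0)| ≤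
      M₂ / 2 * (h j * h k) * ∑ a, ∑ b,
        h a * h b * ∫ v, |v j * v k * v a * v b| * K v :=
  kernel_second_moment_expansion_general d K hK_nonneg ν₂ hK_mom2_int hK_mom2 hK_mom3_int hK_mom3
    hK_mom4_int f hf M₂ hM₂ h hh x j k
end

section
/- Let X₁,…,X_n be fixed points in ℝ^d, let m : ℝ^d → ℝ be differentiable with ‖∇m(x)‖ ≤ L for all x ∈ ℝ^d, and let Y_i = m(X_i) + ε_i where ε₁,…,ε_n are independent N(0, σ²) random variables. Let ℰ be a set of J pairs (i,ℓ) with i < ℓ such that ‖X_i − X_ℓ‖ ≤ D for all (i,ℓ) ∈ ℰ, and define σ̂² = (1/(2J)) Σ_{(i,ℓ)∈ℰ} (Y_i − Y_ℓ)². Then 0 ≤ E[σ̂²] − σ² ≤ L²D²/2. -/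
/-!
Writing `Y i = m (X i) + ε i`, each squared difference `(Y i - Y ℓ)²` has expectation
`(m (X i) - m (X ℓ))² + 2σ²`, because the independent centred noises contribute only their
variances. Hence the bias of `σ̂²` is exactly `(1/(2J)) ∑ (m (X i) - m (X ℓ))²`, which is
nonnegative, and each term is at most `L²D²` by the mean value inequality.
-/

open MeasureTheory ProbabilityTheory Finset
open scoped NNReal

section Moments

variable {Ω : Type*} [MeasurableSpace Ω] {P : Measure Ω} [IsProbabilityMeasure P]

lemma integral_sq_eq_variance_add_sq {Z : Ω → ℝ} (hZ : MemLp Z 2 P) :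
    ∫ ω, Z ω ^ 2 ∂P = Var[Z; P] + P[Z] ^ 2 := by
  rw [variance_eq_sub hZ]
  simp only [Pi.pow_apply, sub_add_cancel]

lemma ProbabilityTheory.IndepFun.integral_const_add_sub_sq {X Y : Ω → ℝ} (hX : MemLp X 2 P)
    (hY : MemLp Y 2 P) (hXY : X ⟂ᵢ[P] Y) (c : ℝ) :
    ∫ ω, (c + (X ω - Y ω)) ^ 2 ∂P = (c + (P[X] - P[Y])) ^ 2 + Var[X; P] + Var[Y; P] := by
  have hXsubY : MemLp (fun ω ↦ X ω - Y ω) 2 P := hX.sub hY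
  have hvar : Var[fun ω ↦ c + (X ω - Y ω); P] = Var[X; P] + Var[Y; P] := by
    rw [variance_const_add hXsubY.aestronglyMeasurable, variance_fun_sub hX hY,
      hXY.covariance_eq_zero hX hY]
    ring
  have hmean : P[fun ω ↦ c + (X ω - Y ω)] = c + (P[X] - P[Y]) := by
    rw [integral_add (integrable_const c) (hXsubY.integrable one_le_two),
      integral_sub (hX.integrable one_le_two) (hY.integrable one_le_two), integral_const,
      probReal_univ, one_smul]
  have hZ : MemLp (fun ω ↦ c + (X ω - Y ω)) 2 P := (memLp_const c).add hXsubY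
  rw [integral_sq_eq_variance_add_sq hZ, hvar, hmean]
  ring

variable {ι : Type*} {f : ι → ℝ} {ε Y : ι → Ω → ℝ} {s : ℝ}

lemma integral_sum_sq_sub_of_additive_noise (ℰ : Finset (ι × ι))
    (hY : ∀ i ω, Y i ω = f i + ε i ω) (hε : ∀ i, MemLp (ε i) 2 P) (hmean : ∀ i, P[ε i] = 0)
    (hvar : ∀ i, Var[ε i; P] = s) (hindep : ∀ p ∈ ℰ, ε p.1 ⟂ᵢ[P] ε p.2) :
    ∫ ω, ∑ p ∈ ℰ, (Y p.1 ω - Y p.2 ω) ^ 2 ∂P = ∑ p ∈ ℰ, ((f p.1 - f p.2) ^ 2 + 2 * s) := by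
  have hpair (p : ι × ι) (hp : p ∈ ℰ) :
      ∫ ω, (Y p.1 ω - Y p.2 ω) ^ 2 ∂P = (f p.1 - f p.2) ^ 2 + 2 * s := by
    have hdiff : ∀ ω, Y p.1 ω - Y p.2 ω = (f p.1 - f p.2) + (ε p.1 ω - ε p.2 ω) := fun ω ↦ by
      rw [hY, hY]; ring
    simp only [hdiff]
    rw [(hindep p hp).integral_const_add_sub_sq (hε _) (hε _), hmean, hmean, hvar, hvar]
    ring
  have hint (p : ι × ι) : Integrable (fun ω ↦ (Y p.1 ω - Y p.2 ω) ^ 2) P := by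
    have hYp (i : ι) : MemLp (Y i) 2 P := by
      rw [show Y i = fun ω ↦ f i + ε i ω from funext (hY i)]
      exact (memLp_const (f i)).add (hε i)
    have hsub : MemLp (fun ω ↦ Y p.1 ω - Y p.2 ω) 2 P := (hYp p.1).sub (hYp p.2)
    exact hsub.integrable_sq
  rw [integral_finsetSum ℰ fun p _ ↦ hint p]
  exact sum_congr rfl hpair

lemma rice_estimator_bias_eq (ℰ : Finset (ι × ι)) (hY : ∀ i ω, Y i ω = f i + ε i ω)
    (hε : ∀ i, MemLp (ε i) 2 P) (hmean : ∀ i, P[ε i] = 0) (hvar : ∀ i, Var[ε i; P] = s)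
    (hindep : ∀ p ∈ ℰ, ε p.1 ⟂ᵢ[P] ε p.2) {J : ℕ} (hJ : 0 < J) (hcard : #ℰ = J) :
    (∫ ω, (1 / (2 * (J : ℝ))) * ∑ p ∈ ℰ, (Y p.1 ω - Y p.2 ω) ^ 2 ∂P) - s =
      (1 / (2 * (J : ℝ))) * ∑ p ∈ ℰ, (f p.1 - f p.2) ^ 2 := by
  rw [integral_const_mul, integral_sum_sq_sub_of_additive_noise ℰ hY hε hmean hvar hindep,
    sum_add_distrib, sum_const, hcard, nsmul_eq_mul]
  have hJ' : (J : ℝ) ≠ 0 := by exact_mod_cast hJ.ne'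
  field_simp
  ring

end Moments

lemma sq_sub_le_of_norm_fderiv_le {E : Type*} [NormedAddCommGroup E] [NormedSpace ℝ E]
    {m : E → ℝ} (hm : Differentiable ℝ m) {L : ℝ} (hL : ∀ x, ‖fderiv ℝ m x‖ ≤ L)
    {x y : E} {D : ℝ} (hxy : ‖x - y‖ ≤ D) :
    (m x - m y) ^ 2 ≤ L ^ 2 * D ^ 2 := by
  have hL0 : 0 ≤ L := (norm_nonneg _).trans (hL x)
  have hmvt : |m x - m y| ≤ L * ‖x - y‖ :=
    convex_univ.norm_image_sub_le_of_norm_fderiv_le (fun z _ ↦ hm z) (fun z _ ↦ hL z)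
      (Set.mem_univ y) (Set.mem_univ x)
  calc (m x - m y) ^ 2 = |m x - m y| ^ 2 := (sq_abs _).symm
    _ ≤ (L * D) ^ 2 := by gcongr; exact hmvt.trans (by gcongr)
    _ = L ^ 2 * D ^ 2 := mul_pow L D 2

theorem rice_estimator_bias_bound_general {Ω : Type*} [MeasurableSpace Ω] (P : Measure Ω)
    [IsProbabilityMeasure P] (n d : ℕ) (X : Fin n → EuclideanSpace ℝ (Fin d))
    (m : EuclideanSpace ℝ (Fin d) → ℝ) (hm : Differentiable ℝ m)
    (L : ℝ) (hL : ∀ x, ‖fderiv ℝ m x‖ ≤ L) (σ : ℝ)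
    (ε : Fin n → Ω → ℝ)
    (hindep : iIndepFun ε P)
    (hgauss : ∀ i, Measure.map (ε i) P = gaussianReal 0 ⟨σ ^ 2, sq_nonneg σ⟩)
    (Y : Fin n → Ω → ℝ) (hY : ∀ i ω, Y i ω = m (X i) + ε i ω)
    (ℰ : Finset (Fin n × Fin n)) (hpairs : ∀ p ∈ ℰ, p.1 < p.2)
    (D : ℝ) (hD : ∀ p ∈ ℰ, ‖X p.1 - X p.2‖ ≤ D)
    (J : ℕ) (hJ : 0 < J) (hcard : ℰ.card = J) :
    0 ≤ (∫ ω, (1 / (2 * (J : ℝ))) * ∑ p ∈ ℰ, (Y p.1 ω - Y p.2 ω) ^ 2 ∂P) - σ ^ 2 ∧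
      (∫ ω, (1 / (2 * (J : ℝ))) * ∑ p ∈ ℰ, (Y p.1 ω - Y p.2 ω) ^ 2 ∂P) - σ ^ 2 ≤
        L ^ 2 * D ^ 2 / 2 := by
  -- The variance in `hgauss` elaborates to a bare `Subtype.mk`, on which instance search for
  -- `gaussianReal` fails; abstracting it as `v : ℝ≥0` repairs this.
  obtain ⟨v, hv, hmap⟩ : ∃ v : ℝ≥0, (v : ℝ) = σ ^ 2 ∧ ∀ i, P.map (ε i) = gaussianReal 0 v :=
    ⟨_, rfl, hgauss⟩
  have hlaw (i : Fin n) : HasLaw (ε i) (gaussianReal 0 v) P :=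
    ⟨.of_map_ne_zero (by rw [hmap i]; exact IsProbabilityMeasure.ne_zero _), hmap i⟩
  rw [rice_estimator_bias_eq ℰ hY (fun i ↦ (hlaw i).hasGaussianLaw.memLp_two)
    (fun i ↦ by rw [(hlaw i).integral_eq, integral_id_gaussianReal])
    (fun i ↦ by rw [(hlaw i).variance_eq, variance_id_gaussianReal, hv])
    (fun p hp ↦ hindep.indepFun (hpairs p hp).ne) hJ hcard]
  refine ⟨by positivity, ?_⟩
  have hJ' : (J : ℝ) ≠ 0 := by exact_mod_cast hJ.ne'
  calc (1 / (2 * (J : ℝ))) * ∑ p ∈ ℰ, (m (X p.1) - m (X p.2)) ^ 2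
      ≤ (1 / (2 * (J : ℝ))) * ∑ _p ∈ ℰ, L ^ 2 * D ^ 2 := by
        gcongr with p hp
        exact sq_sub_le_of_norm_fderiv_le hm hL (hD p hp)
    _ = L ^ 2 * D ^ 2 / 2 := by
        rw [sum_const, hcard, nsmul_eq_mul]
        field_simp

/-- Bias bound for the difference-based variance estimator (Section 4.3): with
`Y i = m(X i) + ε i`, `ε i` i.i.d. `N(0, σ²)`, `m` differentiable with `‖∇m‖ ≤ L`, and
pairs `(i,ℓ) ∈ ℰ` satisfying `‖X i − X ℓ‖ ≤ D`, the estimator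
`σ̂² = (1/(2J)) ∑_{(i,ℓ)∈ℰ} (Y i − Y ℓ)²` satisfies `0 ≤ E[σ̂²] − σ² ≤ L²D²/2`. -/
theorem rice_estimator_bias_bound {Ω : Type*} [MeasurableSpace Ω] (P : Measure Ω)
    [IsProbabilityMeasure P] (n d : ℕ) (X : Fin n → EuclideanSpace ℝ (Fin d))
    (m : EuclideanSpace ℝ (Fin d) → ℝ) (hm : Differentiable ℝ m)
    (L : ℝ) (hL : ∀ x, ‖fderiv ℝ m x‖ ≤ L) (σ : ℝ)
    (ε : Fin n → Ω → ℝ) (hmeas : ∀ i, Measurable (ε i))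
    (hindep : iIndepFun ε P)
    (hgauss : ∀ i, Measure.map (ε i) P = gaussianReal 0 ⟨σ ^ 2, sq_nonneg σ⟩)
    (Y : Fin n → Ω → ℝ) (hY : ∀ i ω, Y i ω = m (X i) + ε i ω)
    (ℰ : Finset (Fin n × Fin n)) (hpairs : ∀ p ∈ ℰ, p.1 < p.2)
    (D : ℝ) (hD : ∀ p ∈ ℰ, ‖X p.1 - X p.2‖ ≤ D)
    (J : ℕ) (hJ : 0 < J) (hcard : ℰ.card = J) :
    0 ≤ (∫ ω, (1 / (2 * (J : ℝ))) * ∑ p ∈ ℰ, (Y p.1 ω - Y p.2 ω) ^ 2 ∂P) - σ ^ 2 ∧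
      (∫ ω, (1 / (2 * (J : ℝ))) * ∑ p ∈ ℰ, (Y p.1 ω - Y p.2 ω) ^ 2 ∂P) - σ ^ 2 ≤
        L ^ 2 * D ^ 2 / 2 :=
  rice_estimator_bias_bound_general P n d X m hm L hL σ ε hindep hgauss Y hY ℰ hpairs D hD J hJ
    hcard
end
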